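/- Let G1 and G2 be cubic, matching covered graphs and let G = (G1,v1)*(G2,v2) with principal 3-edge cut ∂X. Then for every edge x ∈ ∂X there exists a perfect matching M of G with ∂X ∩ M = {x}; consequently, |∂X ∩ N| is odd for every perfect matching N of G. -/

import Mathlib

open SimpleGraph

/-- A graph is cubic if every vertex has degree 3. -/
def IsCubic {V : Type*} (G : SimpleGraph V) : Prop :=
  ∀ v : V, (G.neighborSet v).ncard = 3

/-- A 2-factor of `G` is a 2-regular spanning subgraph of `G`. -/
def IsTwoFactor {V : Type*} (G : SimpleGraph V) (H : G.Subgraph) : Prop :=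
  H.IsSpanning ∧ ∀ v : V, (H.neighborSet v).ncard = 2

/-- A graph is 2-factor Hamiltonian if every 2-factor of it is a Hamiltonian cycle,
i.e. a connected 2-regular spanning subgraph. -/
def IsTwoFactorHamiltonian {V : Type*} (G : SimpleGraph V) : Prop :=
  ∀ H : G.Subgraph, IsTwoFactor G H → H.Connected

/-- A brace is a connected bipartite graph on at least four vertices in which every
matching of size at most two is contained in a perfect matching. -/
def IsBrace {V : Type*} (G : SimpleGraph V) : Prop :=
  G.Connected ∧ G.Colorable 2 ∧ 4 ≤ Nat.card V ∧
    ∀ M : G.Subgraph, M.IsMatching → M.edgeSet.ncard ≤ 2 →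
      ∃ P : G.Subgraph, M ≤ P ∧ P.IsPerfectMatching

/-- The Heawood graph, as the point-line incidence graph of the Fano plane:
points and lines are indexed by `Fin 7`, and point `p` lies on line `l` iff
`p + l ∈ {0, 1, 3}` (mod 7), `{0,1,3}` being a planar difference set mod 7. -/
def heawoodGraph : SimpleGraph (Fin 7 ⊕ Fin 7) :=
  SimpleGraph.fromRel fun a b => ∃ p l : Fin 7,
    a = Sum.inl p ∧ b = Sum.inr l ∧ (p + l = 0 ∨ p + l = 1 ∨ p + l = 3)

/-- A cycle (given as a closed walk) alternates between edges of the subgraph `M`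
and edges not in `M`; the wrap-around pair is included by appending the first edge. -/
def IsAlternatingCycle {V : Type*} {G : SimpleGraph V} (M : G.Subgraph) {v : V}
    (p : G.Walk v v) : Prop :=
  p.IsCycle ∧
    List.Chain' (fun e f => e ∈ M.edgeSet ↔ f ∉ M.edgeSet) (p.edges ++ p.edges.take 1)

/-- `σ` is a Pfaffian orientation of `G`: it orients every edge (exactly one direction),
and for every perfect matching `M` and every `M`-alternating cycle, the number of
its edges oriented in agreement with the direction of traversal is odd. -/
def IsPfaffianOrientation {V : Type*} (G : SimpleGraph V) (σ : V → V → Bool) : Prop :=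
  (∀ u v : V, G.Adj u v → σ u v = !σ v u) ∧
  ∀ M : G.Subgraph, M.IsPerfectMatching →
    ∀ (v : V) (p : G.Walk v v), IsAlternatingCycle M p →
      Odd (p.darts.filter fun d => σ d.toProd.1 d.toProd.2).length

/-- A graph with a perfect matching is Pfaffian if it admits a Pfaffian orientation. -/
def IsPfaffian {V : Type*} (G : SimpleGraph V) : Prop :=
  (∃ M : G.Subgraph, M.IsPerfectMatching) ∧ ∃ σ : V → V → Bool, IsPfaffianOrientation G σ

/-- The cut `∂X`: the set of edges of `G` with exactly one endpoint in `X`. -/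
def edgeCut {V : Type*} (G : SimpleGraph V) (X : Set V) : Set (Sym2 V) :=
  {e | e ∈ G.edgeSet ∧ ∃ u w : V, e = s(u, w) ∧ u ∈ X ∧ w ∉ X}

/-- A cut `∂X` is tight if every perfect matching contains exactly one of its edges. -/
def IsTightCut {V : Type*} (G : SimpleGraph V) (X : Set V) : Prop :=
  ∀ M : G.Subgraph, M.IsPerfectMatching → (edgeCut G X ∩ M.edgeSet).ncard = 1

/-- A cut `∂X` is trivial if `|X| = 1` or `|V(G) \ X| = 1`. -/
def IsTrivialCut {V : Type*} (X : Set V) : Prop :=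
  X.ncard = 1 ∨ (Xᶜ : Set V).ncard = 1

/-- The tight cut contraction keeping `X`: contract `V(G) \ X` into a single vertex
(`Sum.inr ()`), deleting loops and parallel edges. -/
def contractOutside {V : Type*} (G : SimpleGraph V) (X : Set V) :
    SimpleGraph (↥X ⊕ Unit) :=
  SimpleGraph.fromRel fun a b =>
    (∃ u v : X, a = Sum.inl u ∧ b = Sum.inl v ∧ G.Adj u v) ∨
    (∃ (u : X) (w : V), w ∉ X ∧ a = Sum.inl u ∧ b = Sum.inr () ∧ G.Adj u w)

/-- A graph is `k`-connected if it has more than `k` vertices and deleting any set of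
fewer than `k` vertices leaves it connected. -/
def IsKConnected {V : Type*} (k : ℕ) (G : SimpleGraph V) : Prop :=
  k < Nat.card V ∧ ∀ S : Set V, S.ncard < k → (G.induce (Sᶜ : Set V)).Connected

/-- A graph is matching covered if it is connected, has an edge, and every edge
lies in a perfect matching. -/
def IsMatchingCovered {V : Type*} (G : SimpleGraph V) : Prop :=
  G.Connected ∧ G.edgeSet.Nonempty ∧
    ∀ e ∈ G.edgeSet, ∃ M : G.Subgraph, M.IsPerfectMatching ∧ e ∈ M.edgeSet

/-- A graph is bridgeless if no edge is a bridge. -/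
def Bridgeless {V : Type*} (G : SimpleGraph V) : Prop :=
  ∀ e : Sym2 V, ¬ G.IsBridge e

/-- `(A, B)` is a bipartition of `G` into the two colour classes `A` and `B`. -/
def IsBipartition {V : Type*} (G : SimpleGraph V) (A B : Set V) : Prop :=
  A ∪ B = Set.univ ∧ Disjoint A B ∧
    ∀ u v : V, G.Adj u v → ((u ∈ A ∧ v ∈ B) ∨ (u ∈ B ∧ v ∈ A))

/-- `G` is the star product `(G1,v1)*(G2,v2)`, witnessed by the embeddings `f` of
`G1 - v1` and `g` of `G2 - v2` into `G`, and the bijection `m` matching the three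
neighbours of `v1` to the three neighbours of `v2`: `v1` and `v2` have degree 3,
the images of `f` and `g` partition the vertices of `G`, and the edges of `G` are
exactly the edges of `G1 - v1`, the edges of `G2 - v2`, and the three matching edges
`f x — g (m x)` for `x` a neighbour of `v1`. -/
def IsStarProductWitness {V V1 V2 : Type*} (G : SimpleGraph V)
    (G1 : SimpleGraph V1) (v1 : V1) (G2 : SimpleGraph V2) (v2 : V2)
    (f : V1 → V) (g : V2 → V) (m : V1 → V2) : Prop :=
  (G1.neighborSet v1).ncard = 3 ∧ (G2.neighborSet v2).ncard = 3 ∧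
  Set.InjOn f {x | x ≠ v1} ∧ Set.InjOn g {y | y ≠ v2} ∧
  (∀ x y, x ≠ v1 → y ≠ v2 → f x ≠ g y) ∧
  (∀ v : V, (∃ x, x ≠ v1 ∧ f x = v) ∨ (∃ y, y ≠ v2 ∧ g y = v)) ∧
  Set.BijOn m (G1.neighborSet v1) (G2.neighborSet v2) ∧
  (∀ a b : V, G.Adj a b ↔
    ((∃ x y, x ≠ v1 ∧ y ≠ v1 ∧ G1.Adj x y ∧ a = f x ∧ b = f y) ∨
     (∃ x y, x ≠ v2 ∧ y ≠ v2 ∧ G2.Adj x y ∧ a = g x ∧ b = g y) ∨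
     (∃ x, G1.Adj v1 x ∧ ((a = f x ∧ b = g (m x)) ∨ (b = f x ∧ a = g (m x))))))

/-- `G` is a star product `(G1,v1)*(G2,v2)`. -/
def IsStarProduct {V V1 V2 : Type*} (G : SimpleGraph V)
    (G1 : SimpleGraph V1) (v1 : V1) (G2 : SimpleGraph V2) (v2 : V2) : Prop :=
  ∃ (f : V1 → V) (g : V2 → V) (m : V1 → V2),
    IsStarProductWitness G G1 v1 G2 v2 f g m

/-- The principal 3-edge cut of a star product: the three added matching edges. -/
def principalCut {V V1 V2 : Type*} (G1 : SimpleGraph V1) (v1 : V1)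
    (f : V1 → V) (g : V2 → V) (m : V1 → V2) : Set (Sym2 V) :=
  {e | ∃ x, G1.Adj v1 x ∧ e = s(f x, g (m x))}

/-!
Given an edge `f x — g (m x)` of the principal cut, choose perfect matchings `M1` of `G1`
through `v1 x` and `M2` of `G2` through `v2 (m x)`. Gluing `M1 - v1` and `M2 - v2` along
`f x — g (m x)` is again a star product, and star products preserve the degree of every
vertex, so the result is a perfect matching of `G`; it meets the cut only in `f x — g (m x)`.

For parity, the principal cut is `∂X` for `X = f (V1 - v1)`, and `|X| = |V1| - 1` is odd since
`G1` has a perfect matching. A perfect matching of `G` pairs up the vertices of `X` that it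
does not join across `∂X`, so it meets `∂X` in an odd number of edges.
-/

theorem Set.injOn_update {α β : Type*} [DecidableEq α] {s : Set α} {a : α} {c : β}
    {k : α → β} (hk : Set.InjOn k {q | q ≠ a}) (hc : a ∈ s → ∀ q, q ≠ a → k q ≠ c) :
    Set.InjOn (Function.update k a c) s := by
  intro q₁ hq₁ q₂ hq₂ h
  by_cases h₁ : q₁ = a <;> by_cases h₂ : q₂ = a
  · exact h₁.trans h₂.symm
  · subst h₁
    rw [Function.update_self, Function.update_of_ne h₂] at h
    exact absurd h.symm (hc hq₁ q₂ h₂)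
  · subst h₂
    rw [Function.update_self, Function.update_of_ne h₁] at h
    exact absurd h (hc hq₂ q₁ h₁)
  · rw [Function.update_of_ne h₁, Function.update_of_ne h₂] at h
    exact hk h₁ h₂ h

theorem odd_ncard_image_compl_singleton {α β : Type*} [Finite α] {f : α → β} {a : α}
    (hf : Set.InjOn f {x | x ≠ a}) (hα : Even (Nat.card α)) :
    Odd (f '' {x | x ≠ a}).ncard := by
  rw [hf.ncard_image, ← Set.compl_singleton_eq, Set.ncard_compl, Set.ncard_singleton]
  have : Nonempty α := ⟨a⟩
  exact Nat.Even.sub_odd Nat.card_pos hα odd_one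

namespace SimpleGraph.Subgraph

variable {V : Type*} {G : SimpleGraph V}

theorem isPerfectMatching_iff_ncard_neighborSet {M : G.Subgraph} :
    M.IsPerfectMatching ↔ ∀ v, (M.neighborSet v).ncard = 1 := by
  refine isPerfectMatching_iff.trans (forall_congr' fun v => ?_)
  rw [Set.ncard_eq_one]
  exact ⟨fun ⟨w, hw, hu⟩ => ⟨w, Set.eq_singleton_iff_unique_mem.2 ⟨hw, hu⟩⟩,
    fun ⟨w, hw⟩ => ⟨w, Set.eq_singleton_iff_unique_mem.1 hw⟩⟩

theorem IsMatching.neighborSet_eq_singleton {M : G.Subgraph} (hM : M.IsMatching) {v w : V}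
    (h : M.Adj v w) : M.neighborSet v = {w} :=
  Set.eq_singleton_iff_unique_mem.2 ⟨h, fun _ h' => hM.eq_of_adj_left h' h⟩

theorem IsMatching.even_ncard_verts {M : G.Subgraph} (hM : M.IsMatching)
    (hfin : M.verts.Finite) : Even M.verts.ncard := by
  have := hfin.fintype
  rw [Set.ncard_eq_toFinset_card']
  exact hM.even_card

theorem IsPerfectMatching.odd_ncard_edgeCut_inter_iff {N : G.Subgraph}
    (hN : N.IsPerfectMatching) {X : Set V} (hX : X.Finite) :
    Odd (edgeCut G X ∩ N.edgeSet).ncard ↔ Odd X.ncard := by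
  choose p hp hpu using fun v => hN.1 (hN.2 v)
  have hpp : ∀ v, p (p v) = v := fun v => (hpu (p v) v (N.adj_symm (hp v))).symm
  set B := {v ∈ X | p v ∈ X}
  have hB : Even B.ncard := by
    have hmatch : (N.induce B).IsMatching := by
      rintro v ⟨hvX, hpvX⟩
      have hpv : p v ∈ B := ⟨hpvX, by rwa [hpp]⟩
      exact ⟨p v, ⟨⟨hvX, hpvX⟩, hpv, hp v⟩, fun w hw => hpu v w hw.2.2⟩
    exact hmatch.even_ncard_verts (hX.subset (Set.sep_subset _ _))
  have hcut : (fun v => s(v, p v)) '' (X \ B) = edgeCut G X ∩ N.edgeSet := by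
    ext e
    constructor
    · rintro ⟨v, ⟨hvX, hpv⟩, rfl⟩
      exact ⟨⟨N.adj_sub (hp v), v, p v, rfl, hvX, fun h => hpv ⟨hvX, h⟩⟩, hp v⟩
    · rintro ⟨⟨-, u, w, rfl, hu, hw⟩, he⟩
      obtain rfl : w = p u := hpu u w he
      exact ⟨u, ⟨hu, fun h => hw h.2⟩, rfl⟩
  have hinj : Set.InjOn (fun v => s(v, p v)) (X \ B) := by
    rintro v ⟨hv, -⟩ w ⟨hw, hwB⟩ he
    rcases Sym2.eq_iff.mp he with ⟨h, -⟩ | ⟨h, h'⟩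
    · exact h
    · exact absurd ⟨hw, by rw [← h]; exact hv⟩ hwB
  rw [← hcut, hinj.ncard_image, ← Set.ncard_sdiff_add_ncard_of_subset (Set.sep_subset _ _) hX]
  exact ⟨fun h => h.add_even hB, fun h => (Nat.odd_add.mp h).mpr hB⟩

end SimpleGraph.Subgraph

theorem IsMatchingCovered.even_natCard {V : Type*} [Finite V] {G : SimpleGraph V}
    (hG : IsMatchingCovered G) : Even (Nat.card V) := by
  have := Fintype.ofFinite V
  obtain ⟨e, he⟩ := hG.2.1
  obtain ⟨M, hM, -⟩ := hG.2.2 e he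
  rw [Nat.card_eq_fintype_card]
  exact hM.even_card

section StarAdj

variable {V V1 V2 : Type*} {H1 : SimpleGraph V1} {v1 : V1} {H2 : SimpleGraph V2} {v2 : V2}
  {f : V1 → V} {g : V2 → V} {m : V1 → V2}

def starAdj (H1 : SimpleGraph V1) (v1 : V1) (H2 : SimpleGraph V2) (v2 : V2)
    (f : V1 → V) (g : V2 → V) (m : V1 → V2) (a b : V) : Prop :=
  (∃ x y, x ≠ v1 ∧ y ≠ v1 ∧ H1.Adj x y ∧ a = f x ∧ b = f y) ∨
  (∃ x y, x ≠ v2 ∧ y ≠ v2 ∧ H2.Adj x y ∧ a = g x ∧ b = g y) ∨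
  (∃ x, H1.Adj v1 x ∧ ((a = f x ∧ b = g (m x)) ∨ (b = f x ∧ a = g (m x))))

theorem starAdj_symm {a b : V} (h : starAdj H1 v1 H2 v2 f g m a b) :
    starAdj H1 v1 H2 v2 f g m b a := by
  rcases h with ⟨x, y, hx, hy, hxy, rfl, rfl⟩ | ⟨x, y, hx, hy, hxy, rfl, rfl⟩ | ⟨x, hx, h | h⟩
  · exact Or.inl ⟨y, x, hy, hx, hxy.symm, rfl, rfl⟩
  · exact Or.inr (Or.inl ⟨y, x, hy, hx, hxy.symm, rfl, rfl⟩)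
  · exact Or.inr (Or.inr ⟨x, hx, Or.inr h⟩)
  · exact Or.inr (Or.inr ⟨x, hx, Or.inl h⟩)

theorem starAdj_mono {G1 : SimpleGraph V1} {G2 : SimpleGraph V2} (h1 : H1 ≤ G1) (h2 : H2 ≤ G2)
    {a b : V} (h : starAdj H1 v1 H2 v2 f g m a b) : starAdj G1 v1 G2 v2 f g m a b := by
  rcases h with ⟨x, y, hx, hy, hxy, h⟩ | ⟨x, y, hx, hy, hxy, h⟩ | ⟨x, hx, h⟩
  · exact Or.inl ⟨x, y, hx, hy, h1 hxy, h⟩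
  · exact Or.inr (Or.inl ⟨x, y, hx, hy, h2 hxy, h⟩)
  · exact Or.inr (Or.inr ⟨x, h1 hx, h⟩)

theorem setOf_starAdj_left [DecidableEq V1] (hf : Set.InjOn f {x | x ≠ v1})
    (hfg : ∀ x y, x ≠ v1 → y ≠ v2 → f x ≠ g y)
    (hm : Set.MapsTo m (H1.neighborSet v1) (H2.neighborSet v2)) {p : V1} (hp : p ≠ v1) :
    {w | starAdj H1 v1 H2 v2 f g m (f p) w} =
      Function.update f v1 (g (m p)) '' H1.neighborSet p := by
  ext w
  constructor
  · rintro (⟨x, y, hx, hy, hxy, hpx, rfl⟩ | ⟨x, y, hx, -, -, hpx, -⟩ |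
      ⟨x, hx, ⟨hpx, rfl⟩ | ⟨rfl, hpx⟩⟩)
    · obtain rfl := hf hp hx hpx
      exact ⟨y, hxy, Function.update_of_ne hy _ _⟩
    · exact absurd hpx (hfg p x hp hx)
    · obtain rfl := hf hp hx.ne' hpx
      exact ⟨v1, hx.symm, Function.update_self _ _ _⟩
    · exact absurd hpx (hfg p (m x) hp (hm hx).ne')
  · rintro ⟨q, hq, rfl⟩
    by_cases hqv : q = v1
    · subst hqv
      exact Or.inr (Or.inr ⟨p, hq.symm, Or.inl ⟨rfl, Function.update_self _ _ _⟩⟩)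
    · exact Or.inl ⟨p, q, hp, hqv, hq, rfl, Function.update_of_ne hqv _ _⟩

-- `x₀` stands for the `H1`-neighbour of `v1` that `m` sends to `y`, if there is one.
theorem setOf_starAdj_right [DecidableEq V2] (hg : Set.InjOn g {y | y ≠ v2})
    (hfg : ∀ x y, x ≠ v1 → y ≠ v2 → f x ≠ g y)
    (hm : Set.MapsTo m (H1.neighborSet v1) (H2.neighborSet v2))
    (hm' : Set.InjOn m (H1.neighborSet v1)) {y : V2} (hy : y ≠ v2) {x₀ : V1}
    (hx₀ : H2.Adj v2 y → H1.Adj v1 x₀ ∧ m x₀ = y) :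
    {w | starAdj H1 v1 H2 v2 f g m (g y) w} = Function.update g v2 (f x₀) '' H2.neighborSet y := by
  ext w
  constructor
  · rintro (⟨x, y', hx, -, -, hyx, -⟩ | ⟨x, y', hx, hy', hxy, hyx, rfl⟩ |
      ⟨x, hx, ⟨hyx, -⟩ | ⟨rfl, hyx⟩⟩)
    · exact absurd hyx.symm (hfg x y hx hy)
    · obtain rfl := hg hy hx hyx
      exact ⟨y', hxy, Function.update_of_ne hy' _ _⟩
    · exact absurd hyx.symm (hfg x y hx.ne' hy)
    · obtain rfl := hg hy (hm hx).ne' hyx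
      have hv2 : H2.Adj v2 (m x) := hm hx
      obtain ⟨hx₀, hmx₀⟩ := hx₀ hv2
      obtain rfl := hm' hx₀ hx hmx₀
      exact ⟨v2, hv2.symm, Function.update_self _ _ _⟩
  · rintro ⟨q, hq, rfl⟩
    by_cases hqv : q = v2
    · subst hqv
      obtain ⟨hx₀, hmx₀⟩ := hx₀ hq.symm
      exact Or.inr (Or.inr ⟨x₀, hx₀, Or.inr ⟨Function.update_self _ _ _, hmx₀ ▸ rfl⟩⟩)
    · exact Or.inr (Or.inl ⟨y, q, hy, hqv, hq, rfl, Function.update_of_ne hqv _ _⟩)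

theorem ncard_setOf_starAdj_left (hf : Set.InjOn f {x | x ≠ v1})
    (hfg : ∀ x y, x ≠ v1 → y ≠ v2 → f x ≠ g y)
    (hm : Set.MapsTo m (H1.neighborSet v1) (H2.neighborSet v2)) {p : V1} (hp : p ≠ v1) :
    {w | starAdj H1 v1 H2 v2 f g m (f p) w}.ncard = (H1.neighborSet p).ncard := by
  classical
  rw [setOf_starAdj_left hf hfg hm hp]
  exact (Set.injOn_update hf fun hv q hq => hfg q (m p) hq (hm (H1.adj_symm hv)).ne').ncard_image

theorem ncard_setOf_starAdj_right (hg : Set.InjOn g {y | y ≠ v2})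
    (hfg : ∀ x y, x ≠ v1 → y ≠ v2 → f x ≠ g y)
    (hm : Set.BijOn m (H1.neighborSet v1) (H2.neighborSet v2)) {y : V2} (hy : y ≠ v2) :
    {w | starAdj H1 v1 H2 v2 f g m (g y) w}.ncard = (H2.neighborSet y).ncard := by
  classical
  obtain ⟨x₀, hx₀⟩ : ∃ x₀, H2.Adj v2 y → H1.Adj v1 x₀ ∧ m x₀ = y := by
    by_cases hy₂ : H2.Adj v2 y
    · obtain ⟨x₀, hx₀, hmx₀⟩ := hm.surjOn hy₂
      exact ⟨x₀, fun _ => ⟨hx₀, hmx₀⟩⟩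
    · exact ⟨v1, fun h => absurd h hy₂⟩
  rw [setOf_starAdj_right hg hfg hm.mapsTo hm.injOn hy hx₀]
  exact (Set.injOn_update hg fun hv q hq =>
    (hfg x₀ q (hx₀ (H2.adj_symm hv)).1.ne' hq).symm).ncard_image

theorem adj_of_starAdj_left_right (hf : Set.InjOn f {x | x ≠ v1})
    (hfg : ∀ x y, x ≠ v1 → y ≠ v2 → f x ≠ g y)
    (hm : Set.MapsTo m (H1.neighborSet v1) (H2.neighborSet v2)) {p : V1} {y : V2}
    (hp : p ≠ v1) (hy : y ≠ v2) (h : starAdj H1 v1 H2 v2 f g m (f p) (g y)) : H1.Adj v1 p := by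
  classical
  obtain ⟨q, hq, hqy⟩ := (setOf_starAdj_left hf hfg hm hp).le h
  by_cases hqv : q = v1
  · exact hqv ▸ hq.symm
  · rw [Function.update_of_ne hqv] at hqy
    exact absurd hqy (hfg q y hqv hy)

end StarAdj

namespace IsStarProductWitness

variable {V V1 V2 : Type*} {G : SimpleGraph V} {G1 : SimpleGraph V1} {v1 : V1}
  {G2 : SimpleGraph V2} {v2 : V2} {f : V1 → V} {g : V2 → V} {m : V1 → V2}

theorem adj_iff (hw : IsStarProductWitness G G1 v1 G2 v2 f g m) {a b : V} :
    G.Adj a b ↔ starAdj G1 v1 G2 v2 f g m a b :=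
  hw.2.2.2.2.2.2.2 a b

def glue (hw : IsStarProductWitness G G1 v1 G2 v2 f g m) (M1 : G1.Subgraph)
    (M2 : G2.Subgraph) : G.Subgraph where
  verts := Set.univ
  Adj := starAdj M1.spanningCoe v1 M2.spanningCoe v2 f g m
  adj_sub h := hw.adj_iff.2 (starAdj_mono M1.spanningCoe_le M2.spanningCoe_le h)
  edge_vert _ := Set.mem_univ _
  symm := ⟨fun _ _ => starAdj_symm⟩

theorem isPerfectMatching_glue (hw : IsStarProductWitness G G1 v1 G2 v2 f g m)
    {M1 : G1.Subgraph} {M2 : G2.Subgraph} (hM1 : M1.IsPerfectMatching)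
    (hM2 : M2.IsPerfectMatching) {x : V1} (hx : M1.Adj v1 x) (hmx : M2.Adj v2 (m x)) :
    (hw.glue M1 M2).IsPerfectMatching := by
  obtain ⟨-, -, hf, hg, hfg, hcover, -, -⟩ := hw
  have hm : Set.BijOn m (M1.neighborSet v1) (M2.neighborSet v2) := by
    rw [hM1.1.neighborSet_eq_singleton hx, hM2.1.neighborSet_eq_singleton hmx]
    exact Set.bijOn_singleton.2 rfl
  rw [Subgraph.isPerfectMatching_iff_ncard_neighborSet] at hM1 hM2 ⊢
  intro v
  rcases hcover v with ⟨p, hp, rfl⟩ | ⟨y, hy, rfl⟩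
  · exact (ncard_setOf_starAdj_left hf hfg hm.mapsTo hp).trans (hM1 p)
  · exact (ncard_setOf_starAdj_right hg hfg hm hy).trans (hM2 y)

theorem principalCut_inter_edgeSet_glue (hw : IsStarProductWitness G G1 v1 G2 v2 f g m)
    {M1 : G1.Subgraph} {M2 : G2.Subgraph} (hM1 : M1.IsMatching) {x : V1}
    (hx : M1.Adj v1 x) (hmx : M2.Adj v2 (m x)) :
    principalCut G1 v1 f g m ∩ (hw.glue M1 M2).edgeSet = {s(f x, g (m x))} := by
  obtain ⟨-, -, hf, -, hfg, -, hm, -⟩ := hw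
  have hm' : Set.MapsTo m (M1.neighborSet v1) (M2.neighborSet v2) := by
    intro x' hx'
    rwa [← hM1.eq_of_adj_left hx hx']
  ext e
  constructor
  · rintro ⟨⟨x', hx', rfl⟩, he⟩
    obtain rfl := hM1.eq_of_adj_left hx
      (adj_of_starAdj_left_right hf hfg hm' hx'.ne' (hm.mapsTo hx').ne' he)
    rfl
  · rintro rfl
    exact ⟨⟨x, M1.adj_sub hx, rfl⟩, Or.inr (Or.inr ⟨x, hx, Or.inl ⟨rfl, rfl⟩⟩)⟩

theorem exists_isPerfectMatching_principalCut_inter_eq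
    (hw : IsStarProductWitness G G1 v1 G2 v2 f g m) (h1 : IsMatchingCovered G1)
    (h2 : IsMatchingCovered G2) {e : Sym2 V} (he : e ∈ principalCut G1 v1 f g m) :
    ∃ M : G.Subgraph, M.IsPerfectMatching ∧ principalCut G1 v1 f g m ∩ M.edgeSet = {e} := by
  obtain ⟨x, hx, rfl⟩ := he
  obtain ⟨M1, hM1, hxM1⟩ := h1.2.2 s(v1, x) hx
  have hm : Set.MapsTo m (G1.neighborSet v1) (G2.neighborSet v2) := hw.2.2.2.2.2.2.1.mapsTo
  obtain ⟨M2, hM2, hxM2⟩ := h2.2.2 s(v2, m x) (hm hx)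
  exact ⟨hw.glue M1 M2, hw.isPerfectMatching_glue hM1 hM2 hxM1 hxM2,
    hw.principalCut_inter_edgeSet_glue hM1.1 hxM1 hxM2⟩

theorem principalCut_eq_edgeCut (hw : IsStarProductWitness G G1 v1 G2 v2 f g m) :
    principalCut G1 v1 f g m = edgeCut G (f '' {x | x ≠ v1}) := by
  classical
  obtain ⟨-, -, hf, -, hfg, -, hm, hadj⟩ := hw
  ext e
  constructor
  · rintro ⟨x, hx, rfl⟩
    refine ⟨(hadj _ _).2 (Or.inr (Or.inr ⟨x, hx, Or.inl ⟨rfl, rfl⟩⟩)), f x, g (m x), rfl,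
      ⟨x, hx.ne', rfl⟩, ?_⟩
    rintro ⟨x', hx', h⟩
    exact hfg x' (m x) hx' (hm.mapsTo hx).ne' h
  · rintro ⟨he, -, w, rfl, ⟨p, hp, rfl⟩, hwX⟩
    obtain ⟨q, hq, rfl⟩ := (setOf_starAdj_left hf hfg hm.mapsTo hp).le ((hadj _ _).1 he)
    by_cases hqv : q = v1
    · subst hqv
      exact ⟨p, hq.symm, by rw [Function.update_self]⟩
    · exact absurd ⟨q, hqv, (Function.update_of_ne hqv _ _).symm⟩ hwX

theorem odd_ncard_principalCut_inter [Finite V1]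
    (hw : IsStarProductWitness G G1 v1 G2 v2 f g m) (hV1 : Even (Nat.card V1))
    {N : G.Subgraph} (hN : N.IsPerfectMatching) :
    Odd (principalCut G1 v1 f g m ∩ N.edgeSet).ncard := by
  rw [hw.principalCut_eq_edgeCut, hN.odd_ncard_edgeCut_inter_iff ((Set.toFinite _).image f)]
  obtain ⟨-, -, hf, -⟩ := hw
  exact odd_ncard_image_compl_singleton hf hV1

end IsStarProductWitness

theorem principalCut_perfectMatchings_general {V V1 V2 : Type*}
    [Fintype V1]
    (G : SimpleGraph V) (G1 : SimpleGraph V1) (v1 : V1) (G2 : SimpleGraph V2) (v2 : V2)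
    (f : V1 → V) (g : V2 → V) (m : V1 → V2)
    (h1mc : IsMatchingCovered G1) (h2mc : IsMatchingCovered G2)
    (hw : IsStarProductWitness G G1 v1 G2 v2 f g m) :
    (∀ x ∈ principalCut G1 v1 f g m, ∃ M : G.Subgraph, M.IsPerfectMatching ∧
        principalCut G1 v1 f g m ∩ M.edgeSet = {x}) ∧
    ∀ N : G.Subgraph, N.IsPerfectMatching →
      Odd (principalCut G1 v1 f g m ∩ N.edgeSet).ncard :=
  ⟨fun _ he => hw.exists_isPerfectMatching_principalCut_inter_eq h1mc h2mc he,
    fun _ hN => hw.odd_ncard_principalCut_inter h1mc.even_natCard hN⟩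

/-- Let `G1` and `G2` be cubic, matching covered graphs and let
`G = (G1,v1)*(G2,v2)` with principal 3-edge cut `∂X`. Then for every edge `x ∈ ∂X` there
is a perfect matching `M` of `G` with `∂X ∩ M = {x}`; consequently, `|∂X ∩ N|` is odd
for every perfect matching `N` of `G`. -/
theorem principalCut_perfectMatchings {V V1 V2 : Type*}
    [Fintype V] [Fintype V1] [Fintype V2]
    (G : SimpleGraph V) (G1 : SimpleGraph V1) (v1 : V1) (G2 : SimpleGraph V2) (v2 : V2)
    (f : V1 → V) (g : V2 → V) (m : V1 → V2)
    (h1c : IsCubic G1) (h1mc : IsMatchingCovered G1)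
    (h2c : IsCubic G2) (h2mc : IsMatchingCovered G2)
    (hw : IsStarProductWitness G G1 v1 G2 v2 f g m) :
    (∀ x ∈ principalCut G1 v1 f g m, ∃ M : G.Subgraph, M.IsPerfectMatching ∧
        principalCut G1 v1 f g m ∩ M.edgeSet = {x}) ∧
    ∀ N : G.Subgraph, N.IsPerfectMatching →
      Odd (principalCut G1 v1 f g m ∩ N.edgeSet).ncard :=
  principalCut_perfectMatchings_general G G1 v1 G2 v2 f g m h1mc h2mc hw
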